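/- If f is a holomorphic map from the unit disk to itself and φ(z) = (1-|z|²)/(1-|f(z)|²) · f'(z), a(z) = f*Γ - Γ where Γ = i(z̄dz - zdz̄)/(1-|z|²), then φ satisfies the covariant holomorphicity condition ∂_z̄ φ - i a_z̄ φ = 0. -/

import Mathlib

open Complex

/-- Wirtinger derivative ∂/∂z̄ of a function ℂ → ℂ. -/
noncomputable def wderivBar (f : ℂ → ℂ) (z : ℂ) : ℂ :=
  (fderiv ℝ f z 1 + Complex.I * fderiv ℝ f z Complex.I) / 2

/-- dz̄-component of the spin connection Γ = i(z̄dz - zdz̄)/(1-|z|²). -/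
noncomputable def GammaZbar (z : ℂ) : ℂ := -Complex.I * z / (1 - (‖z‖ : ℂ) ^ 2)

private lemma fderiv_of_holo {u : ℂ → ℂ} {z : ℂ} (hu : DifferentiableAt ℂ u z) (w : ℂ) :
    fderiv ℝ u z w = deriv u z * w := by
  rw [hu.hasDerivAt.complexToReal_fderiv.fderiv]
  simp [smul_eq_mul, mul_comm]

private lemma wderivBar_holo {u : ℂ → ℂ} {z : ℂ} (hu : DifferentiableAt ℂ u z) :
    wderivBar u z = 0 := by
  unfold wderivBar
  rw [fderiv_of_holo hu, fderiv_of_holo hu]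
  ring_nf
  simp only [Complex.I_sq]
  ring

private lemma wderivBar_mul {u v : ℂ → ℂ} {z : ℂ} (hu : DifferentiableAt ℝ u z)
    (hv : DifferentiableAt ℝ v z) :
    wderivBar (fun w => u w * v w) z = wderivBar u z * v z + u z * wderivBar v z := by
  unfold wderivBar
  rw [fderiv_fun_mul hu hv]
  simp only [ContinuousLinearMap.add_apply, ContinuousLinearMap.smul_apply, smul_eq_mul]
  ring

private lemma wderivBar_sub {u v : ℂ → ℂ} {z : ℂ} (hu : DifferentiableAt ℝ u z)
    (hv : DifferentiableAt ℝ v z) :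
    wderivBar (fun w => u w - v w) z = wderivBar u z - wderivBar v z := by
  unfold wderivBar
  rw [fderiv_fun_sub hu hv]
  simp only [ContinuousLinearMap.sub_apply]
  ring

private lemma wderivBar_const (c z : ℂ) : wderivBar (fun _ => c) z = 0 := by
  unfold wderivBar
  simp

private lemma wderivBar_id (z : ℂ) : wderivBar (fun w => w) z = 0 := by
  unfold wderivBar
  rw [fderiv_id']
  simp [Complex.I_sq]

private lemma wderivBar_conj (z : ℂ) : wderivBar (fun w => (starRingEnd ℂ) w) z = 1 := by
  unfold wderivBar
  have : fderiv ℝ (fun w => (starRingEnd ℂ) w) z = Complex.conjCLE.toContinuousLinearMap := by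
    exact (Complex.conjCLE.hasFDerivAt (x := z)).fderiv
  rw [this]
  simp [Complex.conjCLE_apply, Complex.conj_I]

private lemma wderivBar_conj_comp {u : ℂ → ℂ} {z : ℂ} (hu : DifferentiableAt ℂ u z) :
    wderivBar (fun w => (starRingEnd ℂ) (u w)) z = (starRingEnd ℂ) (deriv u z) := by
  unfold wderivBar
  have h1 : HasFDerivAt (fun w => (starRingEnd ℂ) (u w))
      (Complex.conjCLE.toContinuousLinearMap.comp (fderiv ℝ u z)) z :=
    (Complex.conjCLE.hasFDerivAt).comp z (hu.restrictScalars ℝ).hasFDerivAt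
  rw [h1.fderiv]
  simp only [ContinuousLinearMap.coe_comp', Function.comp_apply,
    ContinuousLinearEquiv.coe_coe, Complex.conjCLE_apply]
  rw [fderiv_of_holo hu, fderiv_of_holo hu]
  simp only [map_mul, Complex.conj_I]
  ring_nf
  simp only [Complex.I_sq, map_one]
  ring

private lemma wderivBar_comp {h u : ℂ → ℂ} {z : ℂ} (hh : DifferentiableAt ℂ h (u z))
    (hu : DifferentiableAt ℝ u z) :
    wderivBar (fun w => h (u w)) z = deriv h (u z) * wderivBar u z := by
  unfold wderivBar
  have h1 : fderiv ℝ (fun w => h (u w)) z =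
      (fderiv ℝ h (u z)).comp (fderiv ℝ u z) :=
    fderiv_comp z (hh.restrictScalars ℝ) hu
  rw [h1]
  simp only [ContinuousLinearMap.coe_comp', Function.comp_apply]
  rw [fderiv_of_holo hh, fderiv_of_holo hh]
  ring

private lemma key_cast (u : ℂ) :
    ((1 - ‖u‖ ^ 2 : ℝ) : ℂ) = 1 - u * (starRingEnd ℂ) u := by
  rw [Complex.mul_conj, ← Complex.sq_norm]
  push_cast
  ring

/-- For a holomorphic self-map f of the unit disk, the Higgs field
φ = ((1-|z|²)/(1-|f|²))·f' and gauge potential a = f*Γ - Γ satisfy the covariant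
holomorphicity condition ∂_z̄φ - i a_z̄ φ = 0. -/
theorem covariant_holomorphicity
    (f : ℂ → ℂ)
    (hf : DifferentiableOn ℂ f {z : ℂ | ‖z‖ < 1})
    (hmap : ∀ z : ℂ, ‖z‖ < 1 → ‖f z‖ < 1)
    (φ azbar : ℂ → ℂ)
    (hφ : ∀ z : ℂ, φ z =
      (((1 - ‖z‖ ^ 2 : ℝ) : ℂ) / ((1 - ‖f z‖ ^ 2 : ℝ) : ℂ)) * deriv f z)
    (ha : ∀ z : ℂ, azbar z = GammaZbar (f z) * (starRingEnd ℂ) (deriv f z) - GammaZbar z) :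
    ∀ z : ℂ, ‖z‖ < 1 →
      wderivBar φ z - Complex.I * azbar z * φ z = 0 := by
  have hopen : IsOpen {z : ℂ | ‖z‖ < 1} :=
    isOpen_lt continuous_norm continuous_const
  have hφ' : φ = fun w => (1 - w * (starRingEnd ℂ) w) *
      (1 - f w * (starRingEnd ℂ) (f w))⁻¹ * deriv f w := by
    funext w
    rw [hφ w, div_eq_mul_inv, key_cast, key_cast]
  subst hφ'
  intro z hz
  have hdz : DifferentiableAt ℂ f z := hf.differentiableAt (hopen.mem_nhds hz)
  have hdf' : DifferentiableAt ℂ (deriv f) z :=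
    (((hf.analyticOnNhd hopen).deriv) z hz).differentiableAt
  -- nonvanishing denominators
  have hA : (1 : ℂ) - z * (starRingEnd ℂ) z ≠ 0 := by
    rw [← key_cast]
    simp only [ne_eq, Complex.ofReal_eq_zero]
    nlinarith [norm_nonneg z]
  have hB : (1 : ℂ) - f z * (starRingEnd ℂ) (f z) ≠ 0 := by
    rw [← key_cast]
    simp only [ne_eq, Complex.ofReal_eq_zero]
    nlinarith [norm_nonneg (f z), hmap z hz]
  -- real differentiability facts
  have hid : DifferentiableAt ℝ (fun w : ℂ => w) z := differentiableAt_fun_id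
  have hconj : DifferentiableAt ℝ (fun w : ℂ => (starRingEnd ℂ) w) z :=
    Complex.conjCLE.differentiableAt
  have hN : DifferentiableAt ℝ (fun w : ℂ => 1 - w * (starRingEnd ℂ) w) z :=
    (differentiableAt_const 1).sub (hid.mul hconj)
  have hfR : DifferentiableAt ℝ f z := hdz.restrictScalars ℝ
  have hconjf : DifferentiableAt ℝ (fun w => (starRingEnd ℂ) (f w)) z :=
    Complex.conjCLE.differentiableAt.comp z hfR
  have hD : DifferentiableAt ℝ (fun w => 1 - f w * (starRingEnd ℂ) (f w)) z :=
    (differentiableAt_const 1).sub (hfR.mul hconjf)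
  have hinvC : DifferentiableAt ℂ Inv.inv ((1 : ℂ) - f z * (starRingEnd ℂ) (f z)) :=
    differentiableAt_inv hB
  have hDinv : DifferentiableAt ℝ (fun w => (1 - f w * (starRingEnd ℂ) (f w))⁻¹) z :=
    (hinvC.restrictScalars ℝ).comp z hD
  have hf'R : DifferentiableAt ℝ (deriv f) z := hdf'.restrictScalars ℝ
  -- Wirtinger derivatives of the pieces
  have wN : wderivBar (fun w : ℂ => 1 - w * (starRingEnd ℂ) w) z = -z := by
    rw [wderivBar_sub (differentiableAt_const 1) (hid.fun_mul hconj),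
      wderivBar_const, wderivBar_mul hid hconj, wderivBar_id, wderivBar_conj]
    ring
  have wD : wderivBar (fun w => 1 - f w * (starRingEnd ℂ) (f w)) z =
      -(f z * (starRingEnd ℂ) (deriv f z)) := by
    rw [wderivBar_sub (differentiableAt_const 1) (hfR.fun_mul hconjf),
      wderivBar_const, wderivBar_mul hfR hconjf, wderivBar_holo hdz,
      wderivBar_conj_comp hdz]
    ring
  have wDinv : wderivBar (fun w => (1 - f w * (starRingEnd ℂ) (f w))⁻¹) z =
      -(((1 : ℂ) - f z * (starRingEnd ℂ) (f z)) ^ 2)⁻¹ *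
        -(f z * (starRingEnd ℂ) (deriv f z)) := by
    have := wderivBar_comp (h := Inv.inv)
      (u := fun w => 1 - f w * (starRingEnd ℂ) (f w)) hinvC hD
    rw [this, wD, deriv_inv]
  have wND : wderivBar (fun w => (1 - w * (starRingEnd ℂ) w) *
      (1 - f w * (starRingEnd ℂ) (f w))⁻¹) z =
      -z * ((1 : ℂ) - f z * (starRingEnd ℂ) (f z))⁻¹ +
      (1 - z * (starRingEnd ℂ) z) *
        (-(((1 : ℂ) - f z * (starRingEnd ℂ) (f z)) ^ 2)⁻¹ *
          -(f z * (starRingEnd ℂ) (deriv f z))) := by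
    rw [wderivBar_mul hN hDinv, wN, wDinv]
  have wφ : wderivBar (fun w => (1 - w * (starRingEnd ℂ) w) *
      (1 - f w * (starRingEnd ℂ) (f w))⁻¹ * deriv f w) z =
      (-z * ((1 : ℂ) - f z * (starRingEnd ℂ) (f z))⁻¹ +
      (1 - z * (starRingEnd ℂ) z) *
        (-(((1 : ℂ) - f z * (starRingEnd ℂ) (f z)) ^ 2)⁻¹ *
          -(f z * (starRingEnd ℂ) (deriv f z)))) * deriv f z := by
    rw [wderivBar_mul (hN.fun_mul hDinv) hf'R, wND, wderivBar_holo hdf']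
    ring
  rw [wφ, ha z]
  unfold GammaZbar
  rw [show ((1 : ℂ) - (‖f z‖ : ℂ) ^ 2) = 1 - f z * (starRingEnd ℂ) (f z) by
      rw [← key_cast]; push_cast; ring,
    show ((1 : ℂ) - (‖z‖ : ℂ) ^ 2) = 1 - z * (starRingEnd ℂ) z by
      rw [← key_cast]; push_cast; ring]
  field_simp
  ring_nf
  simp only [Complex.I_sq]
  ring
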